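/- (One-dimensional OLCT inversion, complex scalar model.) Let Λ = (a,b,c,d) with ad − bc = 1 and b ≠ 0, and let f : ℝ → ℂ be a Schwartz function. Define ℒ_Λ[f](w) = ∫_ℝ f(x) K_Λ(x,w) dx with K_Λ(x,w) = (2π|b|)^{-1/2} exp(i(a x² − 2 x w + d w² − π/2)/(2b)). Then for all x ∈ ℝ, f(x) = ∫_ℝ ℒ_Λ[f](w) · conj(K_Λ(x,w)) dw. -/

import Mathlib

/-!
The phase of `K_Λ(y,w)` splits into a part depending on `w` alone, the chirp `a y²/(2b)` and the
cross term `-y w/b`, so `K_Λ(y,w) = K₀(w) χ(y) exp(-2πi y ξ)` with `ξ = w/(2πb)`,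
`χ(y) = exp(i a y²/(2b))` and `K₀(w) = K_Λ(0,w)` for `a = 0`. Hence `ℒ_Λ[f](w) = K₀(w) 𝓕(χ f)(ξ)`,
and in the inversion integral `K₀` contributes `|K₀|² = 1/(2π|b|)`. This cancels the Jacobian of
the substitution `w = 2πb ξ`, after which Fourier inversion returns `χ(x) f(x)`, and `conj χ(x)`
removes the chirp.
-/

open MeasureTheory Complex

noncomputable section

/-- The 1D linear canonical transform kernel
K_Λ(x,w) = (2π|b|)^{-1/2} exp(i(a x² − 2 x w + d w² − π/2)/(2b)). -/
def lctKernel (a b d : ℝ) (x w : ℝ) : ℂ :=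
  (Real.sqrt (2 * Real.pi * |b|) : ℂ)⁻¹ *
    Complex.exp (Complex.I *
      (((a * x ^ 2 - 2 * x * w + d * w ^ 2 - Real.pi / 2) / (2 * b) : ℝ) : ℂ))

/-- The 1D Wigner distribution in the LCT domain:
W_{f,g}(t,w) = ∫ f(t+x/2) conj(g(t−x/2)) K_Λ(x,w) dx. -/
def wignerLCT (a b d : ℝ) (f g : ℝ → ℂ) (t w : ℝ) : ℂ :=
  ∫ x : ℝ, f (t + x / 2) * (starRingEnd ℂ) (g (t - x / 2)) * lctKernel a b d x w

open scoped FourierTransform SchwartzMap ComplexConjugate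

theorem iteratedDeriv_exp_ofReal_mul_I (n : ℕ) :
    iteratedDeriv n (fun t : ℝ => cexp (t * I)) = fun t : ℝ => I ^ n * cexp (t * I) := by
  induction n with
  | zero => simp
  | succ n ih =>
    rw [iteratedDeriv_succ, ih]
    funext t
    have hderiv : HasDerivAt (fun t : ℝ => I ^ n * cexp (t * I))
        (I ^ n * (cexp (t * I) * I)) t := by
      simpa using (((hasDerivAt_id t).ofReal_comp.mul_const I).cexp).const_mul (I ^ n)
    rw [hderiv.deriv]
    ring

theorem hasTemperateGrowth_exp_ofReal_mul_I :
    Function.HasTemperateGrowth (fun t : ℝ => cexp (t * I)) := by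
  refine ⟨(ofRealCLM.contDiff.mul contDiff_const).cexp, fun n => ⟨0, 1, fun t => ?_⟩⟩
  rw [norm_iteratedFDeriv_eq_norm_iteratedDeriv, iteratedDeriv_exp_ofReal_mul_I]
  simp [norm_exp_ofReal_mul_I]

theorem hasTemperateGrowth_chirp (s : ℝ) :
    Function.HasTemperateGrowth (fun y : ℝ => cexp ((s * y ^ 2 : ℝ) * I)) :=
  hasTemperateGrowth_exp_ofReal_mul_I.comp (f := fun y : ℝ => s * y ^ 2) (by fun_prop)

theorem conj_exp_ofReal_mul_I (θ : ℝ) : conj (cexp (θ * I)) = cexp ((-θ : ℝ) * I) := by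
  rw [← exp_conj, map_mul, conj_ofReal, conj_I, ofReal_neg, neg_mul, mul_neg]

theorem norm_lctKernel (a b d x w : ℝ) :
    ‖lctKernel a b d x w‖ = (Real.sqrt (2 * Real.pi * |b|))⁻¹ := by
  rw [lctKernel, norm_mul, mul_comm I, norm_exp_ofReal_mul_I, mul_one, norm_inv, norm_real,
    Real.norm_of_nonneg (Real.sqrt_nonneg _)]

theorem lctKernel_mul_conj (a b d x w : ℝ) :
    lctKernel a b d x w * conj (lctKernel a b d x w) = ((2 * Real.pi * |b| : ℝ) : ℂ)⁻¹ := by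
  rw [mul_conj', norm_lctKernel, ofReal_inv, inv_pow, ← ofReal_pow,
    Real.sq_sqrt (by positivity)]

theorem lctKernel_eq_mul (a b d y w : ℝ) :
    lctKernel a b d y w = lctKernel 0 b d 0 w * (cexp ((a / (2 * b) * y ^ 2 : ℝ) * I) *
      cexp ((-2 * Real.pi * y * (w / (2 * Real.pi * b)) : ℝ) * I)) := by
  simp only [lctKernel, mul_assoc, ← exp_add]
  congr 2
  push_cast
  field_simp
  ring

theorem integral_mul_lctKernel (f : ℝ → ℂ) (a b d w : ℝ) :
    ∫ y : ℝ, f y * lctKernel a b d y w = lctKernel 0 b d 0 w *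
      𝓕 (fun y : ℝ => cexp ((a / (2 * b) * y ^ 2 : ℝ) * I) * f y) (w / (2 * Real.pi * b)) := by
  rw [Real.fourier_real_eq_integral_exp_smul, ← integral_const_mul]
  congr 1 with y
  rw [lctKernel_eq_mul, smul_eq_mul]
  ring

theorem conj_lctKernel (a b d x w : ℝ) :
    conj (lctKernel a b d x w) = conj (lctKernel 0 b d 0 w) *
      (cexp ((-(a / (2 * b) * x ^ 2) : ℝ) * I) *
        cexp ((2 * Real.pi * (w / (2 * Real.pi * b)) * x : ℝ) * I)) := by
  rw [lctKernel_eq_mul, map_mul, map_mul, conj_exp_ofReal_mul_I, conj_exp_ofReal_mul_I]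
  congr 5
  ring

theorem SchwartzMap.integral_exp_mul_fourier (g : 𝓢(ℝ, ℂ)) (x : ℝ) :
    ∫ ξ : ℝ, cexp ((2 * Real.pi * ξ * x : ℝ) * I) * 𝓕 (g : ℝ → ℂ) ξ = g x := by
  have hinv := congrFun (congrArg (⇑) (FourierTransform.fourierInv_fourier_eq (F := 𝓢(ℝ, ℂ)) g)) x
  rw [SchwartzMap.fourierInv_coe, SchwartzMap.fourier_coe, Real.fourierInv_eq'] at hinv
  simpa [mul_comm x, mul_assoc] using hinv

theorem lct_inversion_general (a b d : ℝ) (hb : b ≠ 0)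
    (f : SchwartzMap ℝ ℂ) (x : ℝ) :
    f x = ∫ w : ℝ, (∫ y : ℝ, f y * lctKernel a b d y w) *
      (starRingEnd ℂ) (lctKernel a b d x w) := by
  set χ : ℝ → ℂ := fun y => cexp ((a / (2 * b) * y ^ 2 : ℝ) * I)
  set g : 𝓢(ℝ, ℂ) := SchwartzMap.smulLeftCLM ℂ χ f
  have hg : (g : ℝ → ℂ) = fun y => χ y * f y :=
    SchwartzMap.smulLeftCLM_apply (hasTemperateGrowth_chirp _) f
  have hscale : |2 * Real.pi * b| = 2 * Real.pi * |b| := by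
    rw [abs_mul, abs_of_pos Real.two_pi_pos]
  have hamp : ((2 * Real.pi * |b| : ℝ) : ℂ) ≠ 0 := by
    exact_mod_cast (by positivity : 2 * Real.pi * |b| ≠ 0)
  symm
  calc ∫ w : ℝ, (∫ y : ℝ, f y * lctKernel a b d y w) * conj (lctKernel a b d x w)
      = ∫ w : ℝ, (((2 * Real.pi * |b| : ℝ) : ℂ)⁻¹ * conj (χ x)) *
          (cexp ((2 * Real.pi * (w / (2 * Real.pi * b)) * x : ℝ) * I) *
            𝓕 (g : ℝ → ℂ) (w / (2 * Real.pi * b))) := by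
        congr 1 with w
        rw [integral_mul_lctKernel, conj_lctKernel, ← lctKernel_mul_conj 0 b d 0 w, hg,
          conj_exp_ofReal_mul_I]
        ring
    _ = ((2 * Real.pi * |b| : ℝ) : ℂ)⁻¹ * conj (χ x) * ((2 * Real.pi * |b| : ℝ) • g x) := by
        rw [integral_const_mul, Measure.integral_comp_div
          (fun ξ => cexp ((2 * Real.pi * ξ * x : ℝ) * I) * 𝓕 (g : ℝ → ℂ) ξ),
          SchwartzMap.integral_exp_mul_fourier, hscale]
    _ = (conj (χ x) * χ x) * f x := by
        rw [hg, real_smul]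
        field_simp
    _ = f x := by
        rw [conj_mul', norm_exp_ofReal_mul_I, ofReal_one, one_pow, one_mul]

/-- One-dimensional LCT inversion for Schwartz functions:
f(x) = ∫ ℒ_Λ[f](w) conj(K_Λ(x,w)) dw. -/
theorem lct_inversion (a b c d : ℝ) (hΛ : a * d - b * c = 1) (hb : b ≠ 0)
    (f : SchwartzMap ℝ ℂ) (x : ℝ) :
    f x = ∫ w : ℝ, (∫ y : ℝ, f y * lctKernel a b d y w) *
      (starRingEnd ℂ) (lctKernel a b d x w) :=
  lct_inversion_general a b d hb f x
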